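/- arXiv:2410.10069 — 7 statements merged into one kernel-verified Lean document; each statement's English description precedes it below -/
import Mathlib

section
/- Fix real numbers x, y > 1 and let z = xy/((x-1)(y-1)). If (n_k) and (m_l) are constant sequences of real numbers with values n and m respectively, then the double series S = sum over k>=1, l>=1 of (z - k*l)/(x^{n_k + l} * y^{k + m_l}) equals 0. -/
/-!
After pulling out the constant factor `(x ^ n * y ^ m)⁻¹`, the `(k, l)` term is
`(z - k l) x⁻ˡ y⁻ᵏ`, so both summations are geometric: `∑ x⁻ˡ = 1 / (x - 1)` and
`∑ l x⁻ˡ = x / (x - 1) ^ 2`. The double series therefore equals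
`z / ((x - 1) (y - 1)) - x y / ((x - 1) ^ 2 (y - 1) ^ 2)` up to that factor, and this
vanishes precisely for the given value of `z`.
-/

/-- The double series `S((n_k),(m_l))` from the paper (1-indexed `k,l` become `k+1,l+1`;
real exponents use `Real.rpow`). -/
noncomputable def S2 (x y : ℝ) (n m : ℕ → ℝ) : ℝ :=
  ∑' k : ℕ, ∑' l : ℕ,
    (x * y / ((x - 1) * (y - 1)) - ((k : ℝ) + 1) * ((l : ℝ) + 1)) /
      (x ^ (n k + ((l : ℝ) + 1)) * y ^ (((k : ℝ) + 1) + m l))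

section Geometric

variable {𝕜 : Type*} [NormedField 𝕜] {r : 𝕜}

theorem hasSum_pow_succ (hr : ‖r‖ < 1) :
    HasSum (fun l : ℕ => r ^ (l + 1)) (r / (1 - r)) := by
  simpa [pow_succ', div_eq_mul_inv] using (hasSum_geometric_of_norm_lt_one hr).mul_left r

theorem hasSum_succ_mul_pow_succ (hr : ‖r‖ < 1) :
    HasSum (fun l : ℕ => ((l : 𝕜) + 1) * r ^ (l + 1)) (r / (1 - r) ^ 2) := by
  have h := (hasSum_nat_add_iff' (f := fun n : ℕ => (n : 𝕜) * r ^ n) 1).mpr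
    (hasSum_coe_mul_geometric_of_norm_lt_one hr)
  simpa using h

theorem hasSum_sub_succ_mul_mul_pow_succ (hr : ‖r‖ < 1) (a b : 𝕜) :
    HasSum (fun l : ℕ => (a - ((l : 𝕜) + 1) * b) * r ^ (l + 1))
      (a * (r / (1 - r)) - b * (r / (1 - r) ^ 2)) := by
  refine (((hasSum_pow_succ hr).mul_left a).sub
    ((hasSum_succ_mul_pow_succ hr).mul_left b)).congr_fun fun l => ?_
  ring

end Geometric

theorem norm_inv_lt_one_of_one_lt {x : ℝ} (hx : 1 < x) : ‖x⁻¹‖ < 1 := by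
  rw [norm_inv, Real.norm_of_nonneg (by linarith)]
  exact inv_lt_one_of_one_lt₀ hx

theorem div_rpow_add_mul_rpow_add_eq {x y : ℝ} (hx : 0 < x) (hy : 0 < y) (z n m : ℝ)
    (k l : ℕ) :
    (z - ((k : ℝ) + 1) * ((l : ℝ) + 1)) /
        (x ^ (n + ((l : ℝ) + 1)) * y ^ (((k : ℝ) + 1) + m)) =
      (x ^ n * y ^ m)⁻¹ *
        ((z - ((l : ℝ) + 1) * ((k : ℝ) + 1)) * x⁻¹ ^ (l + 1) * y⁻¹ ^ (k + 1)) := by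
  have hxl : x ^ (n + ((l : ℝ) + 1)) = x ^ n * x ^ (l + 1) := by
    exact_mod_cast Real.rpow_add_natCast hx.ne' n (l + 1)
  have hyk : y ^ (((k : ℝ) + 1) + m) = y ^ m * y ^ (k + 1) := by
    rw [add_comm]
    exact_mod_cast Real.rpow_add_natCast hy.ne' m (k + 1)
  rw [hxl, hyk, inv_pow, inv_pow]
  field_simp

/-- If both sequences are constant (with values `n` and `m`), the double series vanishes. -/
theorem stmt1 (x y : ℝ) (hx : 1 < x) (hy : 1 < y) (n m : ℝ) :
    S2 x y (fun _ => n) (fun _ => m) = 0 := by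
  have hx0 : 0 < x := by linarith
  have hy0 : 0 < y := by linarith
  set z := x * y / ((x - 1) * (y - 1))
  set A := x⁻¹ / (1 - x⁻¹)
  set B := x⁻¹ / (1 - x⁻¹) ^ 2
  have hinner (k : ℕ) :
      HasSum (fun l : ℕ => (z - ((k : ℝ) + 1) * ((l : ℝ) + 1)) /
          (x ^ (n + ((l : ℝ) + 1)) * y ^ (((k : ℝ) + 1) + m)))
        ((x ^ n * y ^ m)⁻¹ * ((z * A - ((k : ℝ) + 1) * B) * y⁻¹ ^ (k + 1))) := by
    simp_rw [div_rpow_add_mul_rpow_add_eq hx0 hy0]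
    exact (((hasSum_sub_succ_mul_mul_pow_succ (norm_inv_lt_one_of_one_lt hx) z _).mul_right
      _).mul_left _)
  have houter := (hasSum_sub_succ_mul_mul_pow_succ (norm_inv_lt_one_of_one_lt hy)
    (z * A) B).mul_left (x ^ n * y ^ m)⁻¹
  have hcancel : z * A * (y⁻¹ / (1 - y⁻¹)) - B * (y⁻¹ / (1 - y⁻¹) ^ 2) = 0 := by
    have : x - 1 ≠ 0 := by linarith
    have : y - 1 ≠ 0 := by linarith
    simp only [z, A, B]
    field_simp
    ring
  rw [S2, tsum_congr fun k => (hinner k).tsum_eq, houter.tsum_eq, hcancel, mul_zero]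
end

section
/- Fix real numbers x, y > 1 and let z = xy/((x-1)(y-1)). For any two non-decreasing sequences (n_k) and (m_l) of real numbers, the double series S = sum over k>=1, l>=1 of (z - k*l)/(x^{n_k+l} * y^{k+m_l}) is nonnegative; moreover it equals 0 if and only if both sequences are constant. -/
section WeightedGeometric

variable {a : ℕ → ℝ} {v C : ℝ}

lemma summable_succ_mul_pow (hv0 : 0 ≤ v) (hv1 : v < 1) :
    Summable fun k : ℕ => ((k : ℝ) + 1) * v ^ (k + 1) := by
  have h := summable_pow_mul_geometric_of_norm_lt_one 1
    (by rwa [Real.norm_eq_abs, abs_of_nonneg hv0] : ‖v‖ < 1)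
  refine ((summable_nat_add_iff 1).mpr h).congr fun k => ?_
  push_cast
  ring

lemma summable_mul_pow_of_bounded (hC : ∀ k, ‖a k‖ ≤ C) (hv0 : 0 ≤ v) (hv1 : v < 1) :
    Summable fun k : ℕ => a k * v ^ (k + 1) := by
  refine Summable.of_norm_bounded
    (((summable_nat_add_iff 1).mpr (summable_geometric_of_lt_one hv0 hv1)).mul_left C) fun k => ?_
  rw [norm_mul, norm_pow, Real.norm_of_nonneg hv0]
  gcongr
  exact hC k

lemma summable_succ_mul_mul_pow_of_bounded (hC : ∀ k, ‖a k‖ ≤ C) (hv0 : 0 ≤ v) (hv1 : v < 1) :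
    Summable fun k : ℕ => ((k : ℝ) + 1) * a k * v ^ (k + 1) := by
  refine Summable.of_norm_bounded ((summable_succ_mul_pow hv0 hv1).mul_left C) fun k => ?_
  rw [norm_mul, norm_mul, norm_pow, Real.norm_of_nonneg hv0, Real.norm_of_nonneg (by positivity)]
  calc ((k : ℝ) + 1) * ‖a k‖ * v ^ (k + 1) ≤ ((k : ℝ) + 1) * C * v ^ (k + 1) := by
        gcongr; exact hC k
    _ = C * (((k : ℝ) + 1) * v ^ (k + 1)) := by ring

lemma hasSum_succ_mul_sub_mul_pow (hC : ∀ k, ‖a k‖ ≤ C) (hv0 : 0 ≤ v) (hv1 : v < 1) :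
    HasSum (fun k : ℕ => ((k : ℝ) + 1) * (a k - a (k + 1)) * v ^ (k + 2))
      (∑' k : ℕ, a k * v ^ (k + 1) - (1 - v) * ∑' k : ℕ, ((k : ℝ) + 1) * a k * v ^ (k + 1)) := by
  set P := ∑' k : ℕ, a k * v ^ (k + 1)
  set Q := ∑' k : ℕ, ((k : ℝ) + 1) * a k * v ^ (k + 1)
  have hP : HasSum (fun k : ℕ => a k * v ^ (k + 1)) P :=
    (summable_mul_pow_of_bounded hC hv0 hv1).hasSum
  have hQ : HasSum (fun k : ℕ => ((k : ℝ) + 1) * a k * v ^ (k + 1)) Q :=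
    (summable_succ_mul_mul_pow_of_bounded hC hv0 hv1).hasSum
  have h_shifted := ((hQ.mul_left v).sub ((hasSum_nat_add_iff' 1).mpr hQ)).add
    ((hasSum_nat_add_iff' 1).mpr hP)
  simp only [Finset.range_one, Finset.sum_singleton, CharP.cast_eq_zero, zero_add, one_mul,
    pow_one] at h_shifted
  rw [show P - (1 - v) * Q = v * Q - (Q - a 0 * v) + (P - a 0 * v) by ring]
  exact h_shifted.congr_fun fun k => by push_cast; ring

lemma succ_mul_sub_mul_pow_nonneg (ha : Antitone a) (hv0 : 0 ≤ v) (k : ℕ) :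
    0 ≤ ((k : ℝ) + 1) * (a k - a (k + 1)) * v ^ (k + 2) := by
  have := sub_nonneg.mpr (ha k.le_succ)
  positivity

variable (h0 : ∀ k, 0 ≤ a k) (ha : Antitone a)
include h0 ha

lemma norm_le_of_antitone_of_nonneg (k : ℕ) : ‖a k‖ ≤ a 0 := by
  rw [Real.norm_of_nonneg (h0 k)]
  exact ha (Nat.zero_le k)

lemma one_sub_mul_tsum_succ_mul_mul_pow_le (hv0 : 0 ≤ v) (hv1 : v < 1) :
    (1 - v) * ∑' k : ℕ, ((k : ℝ) + 1) * a k * v ^ (k + 1) ≤ ∑' k : ℕ, a k * v ^ (k + 1) := by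
  have h := (hasSum_succ_mul_sub_mul_pow (norm_le_of_antitone_of_nonneg h0 ha) hv0 hv1).nonneg
    (succ_mul_sub_mul_pow_nonneg ha hv0)
  linarith

lemma one_sub_mul_tsum_succ_mul_mul_pow_eq_iff (hv0 : 0 < v) (hv1 : v < 1) :
    (1 - v) * ∑' k : ℕ, ((k : ℝ) + 1) * a k * v ^ (k + 1) = ∑' k : ℕ, a k * v ^ (k + 1) ↔
      ∀ k, a k = a 0 := by
  have h := hasSum_succ_mul_sub_mul_pow (norm_le_of_antitone_of_nonneg h0 ha) hv0.le hv1
  have h_eq_iff_hasSum_zero :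
      (1 - v) * ∑' k : ℕ, ((k : ℝ) + 1) * a k * v ^ (k + 1) = ∑' k : ℕ, a k * v ^ (k + 1) ↔
        HasSum (fun k : ℕ => ((k : ℝ) + 1) * (a k - a (k + 1)) * v ^ (k + 2)) 0 :=
    ⟨fun e => by rwa [e, sub_self] at h, fun h' => by linarith [h.unique h']⟩
  rw [h_eq_iff_hasSum_zero, hasSum_zero_iff_of_nonneg (succ_mul_sub_mul_pow_nonneg ha hv0.le),
    funext_iff]
  simp only [Pi.zero_apply, mul_eq_zero, pow_eq_zero_iff', hv0.ne', sub_eq_zero, false_and,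
    or_false, Nat.cast_add_one_ne_zero, false_or]
  constructor
  · intro h_succ k
    induction k with
    | zero => rfl
    | succ k ih => rw [← h_succ k, ih]
  · intro h_const k
    rw [h_const k, h_const (k + 1)]

end WeightedGeometric

lemma tsum_tsum_mul_sub_mul {ι κ : Type*} {f g : ι → ℝ} {f' g' : κ → ℝ} (hf : Summable f)
    (hg : Summable g) (hf' : Summable f') (hg' : Summable g') :
    ∑' i, ∑' j, (f i * f' j - g i * g' j) =
      (∑' i, f i) * (∑' j, f' j) - (∑' i, g i) * ∑' j, g' j := by
  simp_rw [(hf'.mul_left _).tsum_sub (hg'.mul_left _), tsum_mul_left]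
  rw [(hf.mul_right _).tsum_sub (hg.mul_right _), tsum_mul_right, tsum_mul_right]

lemma sub_succ_mul_succ_div_rpow_mul_rpow {x y : ℝ} (hx : 0 < x) (hy : 0 < y) (z s t : ℝ)
    (k l : ℕ) :
    (z - ((k : ℝ) + 1) * ((l : ℝ) + 1)) / (x ^ (s + ((l : ℝ) + 1)) * y ^ (((k : ℝ) + 1) + t)) =
      z * (x ^ (-s) * y⁻¹ ^ (k + 1)) * (y ^ (-t) * x⁻¹ ^ (l + 1)) -
        ((k : ℝ) + 1) * x ^ (-s) * y⁻¹ ^ (k + 1) * (((l : ℝ) + 1) * y ^ (-t) * x⁻¹ ^ (l + 1)) := by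
  have hl : ((l : ℝ) + 1) = ((l + 1 : ℕ) : ℝ) := by push_cast; ring
  have hk : ((k : ℝ) + 1) = ((k + 1 : ℕ) : ℝ) := by push_cast; ring
  rw [Real.rpow_add hx, Real.rpow_add hy, Real.rpow_neg hx.le, Real.rpow_neg hy.le, hl, hk,
    Real.rpow_natCast, Real.rpow_natCast]
  simp only [inv_pow]
  field_simp

lemma antitone_rpow_neg {x : ℝ} {n : ℕ → ℝ} (hx : 1 < x) (hn : Monotone n) :
    Antitone fun k => x ^ (-n k) := fun _ _ hij =>
  Real.rpow_le_rpow_of_exponent_le hx.le (neg_le_neg (hn hij))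

lemma norm_rpow_neg_le {x : ℝ} {n : ℕ → ℝ} (hx : 1 < x) (hn : Monotone n) (k : ℕ) :
    ‖x ^ (-n k)‖ ≤ x ^ (-n 0) :=
  norm_le_of_antitone_of_nonneg (fun _ => (Real.rpow_pos_of_pos (one_pos.trans hx) _).le)
    (antitone_rpow_neg hx hn) k

lemma rpow_neg_weighted_sums {x v : ℝ} {n : ℕ → ℝ} (hx : 1 < x) (hn : Monotone n)
    (hv0 : 0 < v) (hv1 : v < 1) :
    0 < (1 - v) * ∑' k : ℕ, ((k : ℝ) + 1) * x ^ (-n k) * v ^ (k + 1) ∧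
      (1 - v) * ∑' k : ℕ, ((k : ℝ) + 1) * x ^ (-n k) * v ^ (k + 1) ≤
        ∑' k : ℕ, x ^ (-n k) * v ^ (k + 1) ∧
      ((1 - v) * ∑' k : ℕ, ((k : ℝ) + 1) * x ^ (-n k) * v ^ (k + 1) =
        ∑' k : ℕ, x ^ (-n k) * v ^ (k + 1) ↔ ∀ k, n k = n 0) := by
  have hx0 : 0 < x := one_pos.trans hx
  have h0 (k : ℕ) : 0 ≤ x ^ (-n k) := (Real.rpow_pos_of_pos hx0 _).le
  have ha := antitone_rpow_neg hx hn
  have hQ : 0 < ∑' k : ℕ, ((k : ℝ) + 1) * x ^ (-n k) * v ^ (k + 1) :=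
    (summable_succ_mul_mul_pow_of_bounded (norm_rpow_neg_le hx hn) hv0.le hv1).tsum_pos
      (fun k => by positivity) 0 (by positivity)
  refine ⟨mul_pos (sub_pos.mpr hv1) hQ, one_sub_mul_tsum_succ_mul_mul_pow_le h0 ha hv0.le hv1, ?_⟩
  rw [one_sub_mul_tsum_succ_mul_mul_pow_eq_iff h0 ha hv0 hv1]
  simp only [Real.rpow_right_inj hx0 hx.ne', neg_inj]

lemma S2_eq_factored {x y : ℝ} {n m : ℕ → ℝ} (hx : 1 < x) (hy : 1 < y) (hn : Monotone n)
    (hm : Monotone m) :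
    S2 x y n m = x * y / ((x - 1) * (y - 1)) * (∑' k : ℕ, x ^ (-n k) * y⁻¹ ^ (k + 1)) *
        (∑' l : ℕ, y ^ (-m l) * x⁻¹ ^ (l + 1)) -
      (∑' k : ℕ, ((k : ℝ) + 1) * x ^ (-n k) * y⁻¹ ^ (k + 1)) *
        ∑' l : ℕ, ((l : ℝ) + 1) * y ^ (-m l) * x⁻¹ ^ (l + 1) := by
  have hy0 : 0 ≤ y⁻¹ := inv_nonneg.mpr (one_pos.trans hy).le
  have hx0 : 0 ≤ x⁻¹ := inv_nonneg.mpr (one_pos.trans hx).le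
  have hy1 := inv_lt_one_of_one_lt₀ hy
  have hx1 := inv_lt_one_of_one_lt₀ hx
  unfold S2
  simp_rw [sub_succ_mul_succ_div_rpow_mul_rpow (one_pos.trans hx) (one_pos.trans hy)]
  rw [tsum_tsum_mul_sub_mul
    ((summable_mul_pow_of_bounded (norm_rpow_neg_le hx hn) hy0 hy1).mul_left _)
    (summable_succ_mul_mul_pow_of_bounded (norm_rpow_neg_le hx hn) hy0 hy1)
    (summable_mul_pow_of_bounded (norm_rpow_neg_le hy hm) hx0 hx1)
    (summable_succ_mul_mul_pow_of_bounded (norm_rpow_neg_le hy hm) hx0 hx1), tsum_mul_left]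

lemma mul_mul_sub_mul_nonneg_and_eq_zero_iff {z c d P Q P' Q' : ℝ} (hz : z * (c * d) = 1)
    (hz0 : 0 < z) (hQ : 0 < c * Q) (hP : c * Q ≤ P) (hQ' : 0 < d * Q') (hP' : d * Q' ≤ P') :
    0 ≤ z * P * P' - Q * Q' ∧ (z * P * P' - Q * Q' = 0 ↔ c * Q = P ∧ d * Q' = P') := by
  have h : z * P * P' - Q * Q' = z * (P * P' - c * Q * (d * Q')) := by
    linear_combination (Q * Q') * hz
  rw [h]
  refine ⟨mul_nonneg hz0.le (sub_nonneg.mpr (mul_le_mul hP hP' hQ'.le (hQ.trans_le hP).le)), ?_⟩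
  rw [mul_eq_zero, or_iff_right hz0.ne', sub_eq_zero, eq_comm,
    mul_eq_mul_iff_eq_and_eq_of_pos hP hP' hQ (hQ'.trans_le hP')]

/-- For non-decreasing real sequences the double series is nonnegative, and vanishes
iff both sequences are constant. -/
theorem stmt2 (x y : ℝ) (hx : 1 < x) (hy : 1 < y) (n m : ℕ → ℝ)
    (hn : Monotone n) (hm : Monotone m) :
    0 ≤ S2 x y n m ∧
      (S2 x y n m = 0 ↔ ((∀ k, n k = n 0) ∧ (∀ l, m l = m 0))) := by
  have hx0 : 0 < x := one_pos.trans hx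
  have hy0 : 0 < y := one_pos.trans hy
  obtain ⟨hA_pos, hA_le, hA_eq⟩ :=
    rpow_neg_weighted_sums hx hn (inv_pos.mpr hy0) (inv_lt_one_of_one_lt₀ hy)
  obtain ⟨hB_pos, hB_le, hB_eq⟩ :=
    rpow_neg_weighted_sums hy hm (inv_pos.mpr hx0) (inv_lt_one_of_one_lt₀ hx)
  have hz : x * y / ((x - 1) * (y - 1)) * ((1 - y⁻¹) * (1 - x⁻¹)) = 1 := by
    have : x - 1 ≠ 0 := (sub_pos.mpr hx).ne'
    have : y - 1 ≠ 0 := (sub_pos.mpr hy).ne'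
    field_simp
  have hz0 : 0 < x * y / ((x - 1) * (y - 1)) :=
    div_pos (mul_pos hx0 hy0) (mul_pos (sub_pos.mpr hx) (sub_pos.mpr hy))
  rw [S2_eq_factored hx hy hn hm, ← hA_eq, ← hB_eq]
  exact mul_mul_sub_mul_nonneg_and_eq_zero_iff hz hz0 hA_pos hA_le hB_pos hB_le
end

section
/- Let mu = (mu_1 ... mu_m)^infty be a periodic binary sequence with minimal period m such that sigma^j(mu) is lexicographically greater than or equal to mu for all j >= 0. Then for all 0 < i < m, the word mu_{i+1} ... mu_m is lexicographically strictly greater than mu_1 ... mu_{m-i}. -/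
/-!
If the shift `σ^i μ` equalled `μ`, then `i < m` would be a period. Otherwise `μ ≺ σ^i μ`, with
first difference at some `k`. If `k < m - i` this is the claim. If `k ≥ m - i`, the agreement of
`μ` and `σ^i μ` on `[0, k)` together with `m`-periodicity shows that `σ^(m-i) μ` agrees with `μ`
before `k - (m - i)` and is smaller there, contradicting `μ ≼ σ^(m-i) μ`.
-/

/-- The one-sided left shift on binary sequences. -/
def shift (x : ℕ → Bool) : ℕ → Bool := fun n => x (n + 1)

/-- Strict lexicographic order on binary sequences (`false < true`). -/
def lexLt (x y : ℕ → Bool) : Prop :=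
  ∃ k : ℕ, (∀ i < k, x i = y i) ∧ x k < y k

/-- Non-strict lexicographic order on binary sequences. -/
def lexLe (x y : ℕ → Bool) : Prop := lexLt x y ∨ x = y

lemma shift_iterate_apply (x : ℕ → Bool) (j n : ℕ) : shift^[j] x n = x (n + j) := by
  induction j generalizing x with
  | zero => rfl
  | succ j ih => rw [Function.iterate_succ_apply, ih]; rfl

lemma lexLt_asymm {x y : ℕ → Bool} (hxy : lexLt x y) : ¬ lexLt y x := by
  rintro ⟨l, hyx, hl⟩
  obtain ⟨k, hxy, hk⟩ := hxy
  rcases lt_trichotomy k l with hkl | rfl | hlk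
  · exact (hyx k hkl ▸ hk).false
  · exact hk.asymm hl
  · exact (hxy l hlk ▸ hl).false

lemma lexLe.not_lexLt {x y : ℕ → Bool} (h : lexLe x y) : ¬ lexLt y x := by
  rcases h with h | rfl
  · exact lexLt_asymm h
  · rintro ⟨k, -, hk⟩
    exact hk.false

lemma shift_iterate_eq_iff_periodic (x : ℕ → Bool) (i : ℕ) :
    shift^[i] x = x ↔ Function.Periodic x i := by
  simp only [funext_iff, shift_iterate_apply, Function.Periodic]

lemma lexLt_shift_iterate_of_periodic {x : ℕ → Bool} {p i k : ℕ}
    (hper : Function.Periodic x (p + i)) (hpk : p ≤ k)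
    (hagree : ∀ t < k, x t = x (t + i)) (hlt : x k < x (k + i)) :
    lexLt (shift^[p] x) x := by
  refine ⟨k - p, fun t ht => ?_, ?_⟩
  · rw [shift_iterate_apply, hagree (t + p) (by omega), add_assoc, hper]
  · rwa [shift_iterate_apply, Nat.sub_add_cancel hpk, ← hper (k - p), ← add_assoc,
      Nat.sub_add_cancel hpk]

theorem stmt4_general (mu : ℕ → Bool) (m : ℕ)
    (hper : ∀ k, mu (k + m) = mu k)
    (hmin : ∀ m', 0 < m' → m' < m → ¬ (∀ k, mu (k + m') = mu k))
    (hshift : ∀ j : ℕ, lexLe mu (shift^[j] mu)) :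
    ∀ i, 0 < i → i < m →
      ∃ j < m - i, (∀ t < j, mu t = mu (i + t)) ∧ mu j < mu (i + j) := by
  intro i hi0 him
  obtain ⟨k, hagree, hlt⟩ : lexLt mu (shift^[i] mu) := (hshift i).resolve_right fun h =>
    hmin i hi0 him ((shift_iterate_eq_iff_periodic mu i).mp h.symm)
  simp only [shift_iterate_apply] at hagree hlt
  rcases lt_or_ge k (m - i) with hk | hk
  · exact ⟨k, hk, fun t ht => by rw [hagree t ht, add_comm], by rwa [add_comm]⟩
  · have hper' : Function.Periodic mu (m - i + i) := by rwa [Nat.sub_add_cancel him.le]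
    exact absurd (lexLt_shift_iterate_of_periodic hper' hk hagree hlt) (hshift (m - i)).not_lexLt

/-- If `mu` is periodic with minimal period `m` and `σ^j(mu) ≽ mu` for all `j`,
then `mu_{i+1}…mu_m ≻ mu_1…mu_{m-i}` for all `0 < i < m` (0-indexed digits). -/
theorem stmt4 (mu : ℕ → Bool) (m : ℕ) (hm : 0 < m)
    (hper : ∀ k, mu (k + m) = mu k)
    (hmin : ∀ m', 0 < m' → m' < m → ¬ (∀ k, mu (k + m') = mu k))
    (hshift : ∀ j : ℕ, lexLe mu (shift^[j] mu)) :
    ∀ i, 0 < i → i < m →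
      ∃ j < m - i, (∀ t < j, mu t = mu (i + t)) ∧ mu j < mu (i + j) :=
  stmt4_general mu m hper hmin hshift
end

section
/- Define, for N >= 2, the set D'_N of binary sequences (alpha_i) with alpha_1...alpha_{2N} = 1^{2N-1}0 and 0^N < alpha_{kN+1}...alpha_{(k+1)N} < 1^N lexicographically for all k >= 2, and the set bar-D'_N of binary sequences (mu_i) with mu_1...mu_{2N} = 0^{2N-1}1 and 0^N < mu_{kN+1}...mu_{(k+1)N} < 1^N for all k >= 2. Then for every (mu, alpha) in bar-D'_N x D'_N and all positive integers m, n: mu < sigma^m(mu) < alpha and mu < sigma^n(alpha) < alpha lexicographically. -/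
/-- The set `D'_N`: sequences beginning with `1^{2N-1}0` whose subsequent blocks of
length `N` are lexicographically strictly between `0^N` and `1^N`. -/
def DN (N : ℕ) : Set (ℕ → Bool) :=
  {a | (∀ i < 2 * N - 1, a i = true) ∧ a (2 * N - 1) = false ∧
    ∀ k, 2 ≤ k → (∃ i < N, a (k * N + i) = true) ∧ (∃ i < N, a (k * N + i) = false)}

/-- The set `\bar{D}'_N`: sequences beginning with `0^{2N-1}1` whose subsequent blocks
of length `N` are lexicographically strictly between `0^N` and `1^N`. -/
def DNbar (N : ℕ) : Set (ℕ → Bool) :=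
  {a | (∀ i < 2 * N - 1, a i = false) ∧ a (2 * N - 1) = true ∧
    ∀ k, 2 ≤ k → (∃ i < N, a (k * N + i) = true) ∧ (∃ i < N, a (k * N + i) = false)}

/-!
Both `mu` and `alpha` start with a constant word of length `2N - 1`, and every window of
length `2N - 1` starting at a positive position contains both letters: before position
`2N - 1` it contains the first letter of the window and the flipped letter at `2N - 1`,
and from there on it covers a whole block of index `≥ 2`, which is neither `0^N` nor `1^N`.
A sequence starting with `0^{2N-1}` is thus below every such window, and one starting with
`1^{2N-1}` above it.
-/

theorem iterate_shift_apply (x : ℕ → Bool) (m n : ℕ) : shift^[m] x n = x (n + m) := by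
  induction m generalizing x with
  | zero => rfl
  | succ m ih => rw [Function.iterate_succ_apply, ih]; rfl

theorem lexLt_of_forall_false_of_exists_true {x y : ℕ → Bool} {c : ℕ}
    (hx : ∀ i < c, x i = false) (hy : ∃ j < c, y j = true) : lexLt x y := by
  classical
  obtain ⟨j, hjc, hj⟩ := hy
  have hex : ∃ j, y j = true := ⟨j, hj⟩
  have hle : Nat.find hex ≤ j := Nat.find_min' hex hj
  refine ⟨Nat.find hex, fun i hi => ?_, ?_⟩
  · rw [hx i (by omega), Bool.of_not_eq_true (Nat.find_min hex hi)]
  · rw [hx _ (by omega), Nat.find_spec hex]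
    exact Bool.false_lt_true

theorem lexLt_of_forall_true_of_exists_false {x y : ℕ → Bool} {c : ℕ}
    (hx : ∀ i < c, x i = true) (hy : ∃ j < c, y j = false) : lexLt y x := by
  classical
  obtain ⟨j, hjc, hj⟩ := hy
  have hex : ∃ j, y j = false := ⟨j, hj⟩
  have hle : Nat.find hex ≤ j := Nat.find_min' hex hj
  refine ⟨Nat.find hex, fun i hi => ?_, ?_⟩
  · rw [hx i (by omega), Bool.of_not_eq_false (Nat.find_min hex hi)]
  · rw [hx _ (by omega), Nat.find_spec hex]
    exact Bool.false_lt_true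

/-- A window `[m, m + 2N - 2]` with `N < m` covers the block `[kN, kN + N - 1]`,
`k = ⌈m / N⌉ ≥ 2`. -/
theorem exists_window_eq_of_blocks {N : ℕ} {a : ℕ → Bool} {b : Bool}
    (hblk : ∀ k, 2 ≤ k → ∃ i < N, a (k * N + i) = b) {m : ℕ} (hm : N < m) :
    ∃ j < 2 * N - 1, a (m + j) = b := by
  have hN : 0 < N := by
    obtain ⟨i, hi, -⟩ := hblk 2 le_rfl
    omega
  set k := (m + N - 1) / N
  have hdiv : k * N + (m + N - 1) % N = m + N - 1 := by
    rw [mul_comm]; exact Nat.div_add_mod _ _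
  have hmod := Nat.mod_lt (m + N - 1) hN
  have hk : 2 ≤ k := by
    by_contra h
    have : k * N ≤ 1 * N := Nat.mul_le_mul_right N (by omega)
    omega
  obtain ⟨i, hi, hb⟩ := hblk k hk
  exact ⟨k * N + i - m, by omega, by rwa [show m + (k * N + i - m) = k * N + i by omega]⟩

theorem exists_iterate_shift_eq {N : ℕ} (hN : 2 ≤ N) {a : ℕ → Bool} {c : Bool}
    (hpre : ∀ i < 2 * N - 1, a i = c) (hflip : a (2 * N - 1) = !c)
    (hblk : ∀ k, 2 ≤ k → (∃ i < N, a (k * N + i) = true) ∧ (∃ i < N, a (k * N + i) = false))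
    {m : ℕ} (hm : 1 ≤ m) (b : Bool) : ∃ j < 2 * N - 1, shift^[m] a j = b := by
  suffices ∃ j < 2 * N - 1, a (m + j) = b by
    simpa only [iterate_shift_apply, Nat.add_comm] using this
  rcases lt_or_ge m (2 * N - 1) with hlt | hge
  · by_cases hb : b = c
    · exact ⟨0, by omega, by rw [hb, Nat.add_zero, hpre m hlt]⟩
    · refine ⟨2 * N - 1 - m, by omega, ?_⟩
      rw [show m + (2 * N - 1 - m) = 2 * N - 1 by omega, hflip]
      exact (Bool.eq_not.mpr hb).symm
  · refine exists_window_eq_of_blocks (fun k hk => ?_) (by omega)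
    cases b
    exacts [(hblk k hk).2, (hblk k hk).1]

/-- Every pair `(mu, alpha) ∈ \bar{D}'_N × D'_N` lies in `U'_2`. -/
theorem stmt12 (N : ℕ) (hN : 2 ≤ N) (mu alpha : ℕ → Bool)
    (hmu : mu ∈ DNbar N) (hal : alpha ∈ DN N) :
    ∀ m n : ℕ, 1 ≤ m → 1 ≤ n →
      lexLt mu (shift^[m] mu) ∧ lexLt (shift^[m] mu) alpha ∧
      lexLt mu (shift^[n] alpha) ∧ lexLt (shift^[n] alpha) alpha := by
  obtain ⟨hmu_pre, hmu_flip, hmu_blk⟩ := hmu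
  obtain ⟨hal_pre, hal_flip, hal_blk⟩ := hal
  intro m n hm hn
  have hmu_win := exists_iterate_shift_eq (c := false) hN hmu_pre hmu_flip hmu_blk hm
  have hal_win := exists_iterate_shift_eq (c := true) hN hal_pre hal_flip hal_blk hn
  exact ⟨lexLt_of_forall_false_of_exists_true hmu_pre (hmu_win true),
    lexLt_of_forall_true_of_exists_false hal_pre (hmu_win false),
    lexLt_of_forall_false_of_exists_true hmu_pre (hal_win true),
    lexLt_of_forall_true_of_exists_false hal_pre (hal_win false)⟩
end

section
/- Let (mu, alpha) be in V'_2 with alpha = (alpha_1...alpha_n)^infty periodic, and suppose mu < sigma^j(alpha) <= alpha and mu < sigma^i(mu) < alpha for all i, j >= 1. Define S := sup{sigma^j(mu) : j >= 1} (lexicographic supremum, attained as a sequence) and alpha^l := (alpha_1...alpha_n)^l S for each l >= 1. Then sigma^j(mu) < alpha_1...alpha_n sigma^j(mu) lexicographically for all j >= 0. -/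
/-- The symbolic set `V'_2`. -/
def V2' : Set ((ℕ → Bool) × (ℕ → Bool)) :=
  {p | p.1 0 = false ∧ p.2 0 = true ∧
    (∀ m : ℕ, lexLe p.1 (shift^[m] p.1) ∧ lexLe (shift^[m] p.1) p.2) ∧
    (∀ n : ℕ, lexLe p.1 (shift^[n] p.2) ∧ lexLe (shift^[n] p.2) p.2)}

/-!
If `w x ≼ x` for the period `w = α₁…αₙ` of `α`, then monotonicity of `u ↦ w u` gives
`wᵐ x ≼ x` for every `m`. But `wᵐ x` agrees with `α` on its first `m n` letters, so once `m n`
exceeds the first position where `x` and `α` differ, `x ≺ α` forces `x ≺ wᵐ x`.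
-/

lemma lexLt_iff_toLex_lt {x y : ℕ → Bool} : lexLt x y ↔ toLex x < toLex y := Iff.rfl

lemma lexLt_of_apply_zero {x y : ℕ → Bool} (hx : x 0 = false) (hy : y 0 = true) :
    lexLt x y :=
  ⟨0, fun _ hi => absurd hi (Nat.not_lt_zero _), by simp [hx, hy]⟩

/-- `prependWord α n x` is the paper's `α₁…αₙ x` (indices here start at `0`). -/
def prependWord (w : ℕ → Bool) (n : ℕ) (x : ℕ → Bool) : ℕ → Bool :=
  fun i => if i < n then w i else x (i - n)

section prependWord

variable {w : ℕ → Bool} {n : ℕ}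

lemma prependWord_lt_prependWord {x y : ℕ → Bool} (h : toLex x < toLex y) :
    toLex (prependWord w n x) < toLex (prependWord w n y) := by
  obtain ⟨k, hagree, hk⟩ := h
  refine ⟨k + n, fun i hi => ?_, ?_⟩
  · by_cases hin : i < n
    · simp [prependWord, hin]
    · simpa [prependWord, hin] using hagree (i - n) (by omega)
  · simpa [prependWord] using hk

lemma prependWord_le_prependWord {x y : ℕ → Bool} (h : toLex x ≤ toLex y) :
    toLex (prependWord w n x) ≤ toLex (prependWord w n y) := by
  rcases h.lt_or_eq with h | h
  · exact (prependWord_lt_prependWord h).le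
  · rw [show x = y from h]

lemma iterate_prependWord_apply_of_lt (hper : ∀ k, w (k + n) = w k) (x : ℕ → Bool) {m i : ℕ}
    (hi : i < m * n) : (prependWord w n)^[m] x i = w i := by
  induction m generalizing i with
  | zero => omega
  | succ m ih =>
    rw [Function.iterate_succ_apply']
    by_cases hin : i < n
    · simp [prependWord, hin]
    · simp only [prependWord, hin, if_false]
      rw [ih (by rw [Nat.succ_mul] at hi; omega), ← hper, Nat.sub_add_cancel (by omega)]

theorem lexLt_prependWord_self (hn : 0 < n) (hper : ∀ k, w (k + n) = w k) {x : ℕ → Bool}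
    (hx : lexLt x w) : lexLt x (prependWord w n x) := by
  rw [lexLt_iff_toLex_lt]
  by_contra hcon
  have hle : toLex (prependWord w n x) ≤ toLex x := not_lt.mp hcon
  have hiter : ∀ m, toLex ((prependWord w n)^[m] x) ≤ toLex x := by
    intro m
    induction m with
    | zero => exact le_rfl
    | succ m ih =>
      rw [Function.iterate_succ_apply']
      exact (prependWord_le_prependWord ih).trans hle
  obtain ⟨k, hagree, hk⟩ := hx
  have hprefix : ∀ i ≤ k, (prependWord w n)^[k + 1] x i = w i := fun i hi =>
    iterate_prependWord_apply_of_lt hper x (by nlinarith)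
  have hlt : lexLt x ((prependWord w n)^[k + 1] x) :=
    ⟨k, fun i hi => (hagree i hi).trans (hprefix i hi.le).symm, by rw [hprefix k le_rfl]; exact hk⟩
  exact ((lexLt_iff_toLex_lt.mp hlt).trans_le (hiter (k + 1))).false

end prependWord

theorem stmt14_general (mu alpha : ℕ → Bool)
    (n : ℕ) (hn : 0 < n) (hper : ∀ k, alpha (k + n) = alpha k)
    (hV : (mu, alpha) ∈ V2')
    (hi : ∀ i, 1 ≤ i → lexLt mu (shift^[i] mu) ∧ lexLt (shift^[i] mu) alpha) :
    ∀ j : ℕ, lexLt (shift^[j] mu)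
      (fun i => if i < n then alpha i else shift^[j] mu (i - n)) := by
  intro j
  apply lexLt_prependWord_self hn hper
  rcases Nat.eq_zero_or_pos j with rfl | hj
  · exact lexLt_of_apply_zero hV.1 hV.2.1
  · exact (hi j hj).2

/-- Key claim in Case (iii) of Lemma `l:U'`: if `alpha` is periodic with period `n`
and `(mu, alpha) ∈ V'_2` with `mu ≺ σ^j(alpha) ≼ alpha` and `mu ≺ σ^i(mu) ≺ alpha`
for all `i, j ≥ 1`, then `σ^j(mu) ≺ alpha_1…alpha_n σ^j(mu)` for all `j ≥ 0`. -/
theorem stmt14 (mu alpha : ℕ → Bool)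
    (n : ℕ) (hn : 0 < n) (hper : ∀ k, alpha (k + n) = alpha k)
    (hV : (mu, alpha) ∈ V2')
    (hj : ∀ j, 1 ≤ j → lexLt mu (shift^[j] alpha) ∧ lexLe (shift^[j] alpha) alpha)
    (hi : ∀ i, 1 ≤ i → lexLt mu (shift^[i] mu) ∧ lexLt (shift^[i] mu) alpha) :
    ∀ j : ℕ, lexLt (shift^[j] mu)
      (fun i => if i < n then alpha i else shift^[j] mu (i - n)) :=
  stmt14_general mu alpha n hn hper hV hi
end

section
/- Let x, y > 1 be reals, z = xy/((x-1)(y-1)), and let (n_k), (m_l) be non-decreasing real sequences with S((n_k),(m_l)) := sum_{k,l >= 1} (z - kl)/(x^{n_k+l} y^{k+m_l}) <= 0. Suppose n_{k'} < n_{k'+1} for some index k'. Define hat-n_k = n_k for k <= k' and hat-n_k = n_k - (n_{k'+1} - n_{k'}) for k > k'. Then (hat-n_k) is non-decreasing with hat-n_{k'+1} = hat-n_{k'}, and S((hat-n_k),(m_l)) < S((n_k),(m_l)). -/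
open Finset

lemma summable_succ_mul_geometric {r : ℝ} (h0 : 0 ≤ r) (h1 : r < 1) :
    Summable fun k : ℕ => ((k : ℝ) + 1) * r ^ (k + 1) := by
  have h := summable_pow_mul_geometric_of_norm_lt_one 1 (r := r)
    (by rwa [Real.norm_eq_abs, abs_of_nonneg h0])
  simpa using (summable_nat_add_iff 1).2 h

section Summability

variable {a b : ℝ} {c : ℕ → ℝ}

lemma summable_succ_div_rpow (ha : 1 < a) (hb : 1 ≤ b) (hc : Monotone c) :
    Summable fun k : ℕ => ((k : ℝ) + 1) / (a ^ ((k : ℝ) + 1) * b ^ c k) := by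
  have ha0 : 0 < a := by linarith
  have hb0 : 0 < b := by linarith
  refine (((summable_succ_mul_geometric (inv_nonneg.2 ha0.le) (inv_lt_one_of_one_lt₀ ha)).mul_left
    (b ^ c 0)⁻¹).of_nonneg_of_le (fun k => by positivity) fun k => ?_)
  have hpow : a ^ ((k : ℝ) + 1) = a ^ (k + 1) := by exact_mod_cast Real.rpow_natCast a (k + 1)
  calc ((k : ℝ) + 1) / (a ^ ((k : ℝ) + 1) * b ^ c k)
      = (b ^ c k)⁻¹ * (((k : ℝ) + 1) * a⁻¹ ^ (k + 1)) := by rw [hpow]; ring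
    _ ≤ (b ^ c 0)⁻¹ * (((k : ℝ) + 1) * a⁻¹ ^ (k + 1)) := by
      gcongr
      exact hc (Nat.zero_le k)

lemma summable_one_div_rpow (ha : 1 < a) (hb : 1 ≤ b) (hc : Monotone c) :
    Summable fun k : ℕ => 1 / (a ^ ((k : ℝ) + 1) * b ^ c k) := by
  have ha0 : 0 < a := by linarith
  have hb0 : 0 < b := by linarith
  refine (summable_succ_div_rpow ha hb hc).of_nonneg_of_le (fun k => by positivity) fun k => ?_
  gcongr
  linarith [k.cast_nonneg (α := ℝ)]

lemma summable_affine_div_rpow (ha : 1 < a) (hb : 1 ≤ b) (hc : Monotone c) (P Q : ℝ) :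
    Summable fun k : ℕ => (P - ((k : ℝ) + 1) * Q) / (a ^ ((k : ℝ) + 1) * b ^ c k) :=
  (((summable_one_div_rpow ha hb hc).mul_left P).sub
    ((summable_succ_div_rpow ha hb hc).mul_left Q)).congr fun k => by ring

end Summability

lemma exists_S2_eq_tsum_affine {x y : ℝ} (hx : 1 < x) (hy : 1 < y) {m : ℕ → ℝ}
    (hm : Monotone m) : ∃ P Q : ℝ, 0 < Q ∧ ∀ n : ℕ → ℝ,
      S2 x y n m = ∑' k : ℕ, (P - ((k : ℝ) + 1) * Q) / (y ^ ((k : ℝ) + 1) * x ^ n k) := by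
  have hx0 : 0 < x := by linarith
  have hy0 : 0 < y := by linarith
  set z := x * y / ((x - 1) * (y - 1))
  set D : ℕ → ℝ := fun l => x ^ ((l : ℝ) + 1) * y ^ m l
  have hA : Summable fun l : ℕ => 1 / D l := summable_one_div_rpow hx hy.le hm
  have hB : Summable fun l : ℕ => ((l : ℝ) + 1) / D l := summable_succ_div_rpow hx hy.le hm
  refine ⟨z * ∑' l : ℕ, 1 / D l, ∑' l : ℕ, ((l : ℝ) + 1) / D l,
    hB.tsum_pos (fun l => by positivity) 0 (by positivity), fun n => tsum_congr fun k => ?_⟩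
  have hterm : ∀ l : ℕ, (z - ((k : ℝ) + 1) * ((l : ℝ) + 1)) /
      (x ^ (n k + ((l : ℝ) + 1)) * y ^ (((k : ℝ) + 1) + m l)) =
      (z * (1 / D l) - ((k : ℝ) + 1) * (((l : ℝ) + 1) / D l)) / (y ^ ((k : ℝ) + 1) * x ^ n k) := by
    intro l
    have : 0 < D l := by positivity
    rw [Real.rpow_add hx0, Real.rpow_add hy0]
    field_simp
    ring
  rw [tsum_congr hterm, tsum_div_const, (hA.mul_left z).tsum_sub (hB.mul_left _), tsum_mul_left,
    tsum_mul_left]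

lemma tsum_eq_add_mul_tsum_nat_add {f g : ℕ → ℝ} {c : ℝ} (K : ℕ) (hf : Summable f)
    (hhead : ∀ k < K, g k = f k) (htail : ∀ j, g (j + K) = c * f (j + K)) :
    ∑' k, g k = ∑' k, f k + (c - 1) * ∑' j, f (j + K) := by
  have hg : Summable g := (summable_nat_add_iff K).1
    ((((summable_nat_add_iff K).2 hf).mul_left c).congr fun j => (htail j).symm)
  rw [← hf.sum_add_tsum_nat_add K, ← hg.sum_add_tsum_nat_add K,
    sum_congr rfl fun k hk => hhead k (mem_range.1 hk), tsum_congr htail, tsum_mul_left]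
  ring

lemma tsum_nat_add_div_neg_of_antitone {g d : ℕ → ℝ} (hg : Antitone g) (hd : ∀ k, 0 < d k)
    (hneg : ∃ N, g N < 0) (hs : Summable fun k => g k / d k) (hS : ∑' k, g k / d k ≤ 0)
    (K : ℕ) : ∑' j, g (j + (K + 1)) / d (j + (K + 1)) < 0 := by
  by_cases hgK : 0 < g K
  · have hhead : 0 < ∑ k ∈ range (K + 1), g k / d k :=
      sum_pos (fun k hk => div_pos (hgK.trans_le (hg (Nat.lt_succ_iff.1 (mem_range.1 hk))))
        (hd k)) nonempty_range_add_one
    linarith [hs.sum_add_tsum_nat_add (K + 1)]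
  · obtain ⟨N, hN⟩ := hneg
    rw [← tsum_zero (α := ℝ) (β := ℕ)]
    refine Summable.tsum_lt_tsum (i := N) (fun j => ?_) ?_ ((summable_nat_add_iff (K + 1)).2 hs)
      summable_zero
    · exact div_nonpos_of_nonpos_of_nonneg ((hg (by omega)).trans (not_lt.1 hgK)) (hd _).le
    · exact div_neg_of_neg_of_pos ((hg (by omega)).trans_lt hN) (hd _)

lemma monotone_flatten {n : ℕ → ℝ} (hn : Monotone n) (K : ℕ) :
    Monotone fun k => if k ≤ K then n k else n k - (n (K + 1) - n K) := by
  refine monotone_nat_of_le_succ fun k => ?_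
  rcases lt_trichotomy k K with h | rfl | h
  · simp only [if_pos h.le, if_pos (Nat.succ_le_of_lt h)]
    exact hn k.le_succ
  · simp
  · simp only [if_neg (not_le.2 h), if_neg (by omega : ¬ k + 1 ≤ K)]
    exact sub_le_sub_right (hn k.le_succ) _

/-- Lemma `l2`: flattening the first jump of `(n_k)` strictly decreases `S` when
`S ≤ 0`. -/
theorem stmt15 (x y : ℝ) (hx : 1 < x) (hy : 1 < y) (n m : ℕ → ℝ)
    (hn : Monotone n) (hm : Monotone m)
    (k' : ℕ) (hk' : n k' < n (k' + 1))
    (hS : S2 x y n m ≤ 0)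
    (nh : ℕ → ℝ)
    (hnh : nh = fun k => if k ≤ k' then n k else n k - (n (k' + 1) - n k')) :
    Monotone nh ∧ nh (k' + 1) = nh k' ∧ S2 x y nh m < S2 x y n m := by
  subst hnh
  refine ⟨monotone_flatten hn k', by simp, ?_⟩
  obtain ⟨P, Q, hQ, hS2⟩ := exists_S2_eq_tsum_affine hx hy hm
  have hx0 : 0 < x := by linarith
  set d := n (k' + 1) - n k'
  have hxd : 1 < x ^ d := Real.one_lt_rpow hx (sub_pos.2 hk')
  have hanti : Antitone fun k : ℕ => P - ((k : ℝ) + 1) * Q := fun i j hij => by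
    dsimp only
    gcongr
  have hneg : ∃ N : ℕ, P - ((N : ℝ) + 1) * Q < 0 := by
    obtain ⟨N, hN⟩ := exists_nat_gt (P / Q)
    exact ⟨N, by rw [div_lt_iff₀ hQ] at hN; nlinarith⟩
  have hsum := summable_affine_div_rpow hy hx.le hn P Q
  have htail := tsum_nat_add_div_neg_of_antitone hanti (fun k => by positivity) hneg hsum
    (hS2 n ▸ hS) k'
  rw [hS2, hS2, tsum_eq_add_mul_tsum_nat_add (c := x ^ d) (k' + 1) hsum ?head ?tail]
  · linarith [mul_neg_of_pos_of_neg (sub_pos.2 hxd) htail]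
  case head => exact fun k hk => by simp only [if_pos (Nat.lt_succ_iff.1 hk)]
  case tail =>
    intro j
    simp only [if_neg (by omega : ¬ j + (k' + 1) ≤ k'), Real.rpow_sub hx0]
    field_simp
end

section
/- Let (mu, alpha) in U'_2, i.e., mu in Sigma_2^0, alpha in Sigma_2^1, and mu < sigma^i(mu) < alpha, mu < sigma^j(alpha) < alpha lexicographically for all i, j >= 1. Suppose n, m are indices with mu_n = 1 and alpha_m = 0, and form the periodic sequences mu' := (mu_1...mu_{n-1} 0 alpha_1...alpha_{m-1} 1)^infty and alpha' := (alpha_1...alpha_{m-1} 1 mu_1...mu_{n-1} 0)^infty. Then sigma^n(mu') = alpha' and sigma^m(alpha') = mu', hence (mu', alpha') is not in the closure of U'_2 whenever it lies in V'_2. -/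
/-- The symbolic set `U'_2`. -/
def U2' : Set ((ℕ → Bool) × (ℕ → Bool)) :=
  {p | p.1 0 = false ∧ p.2 0 = true ∧
    (∀ m : ℕ, 1 ≤ m → lexLt p.1 (shift^[m] p.1) ∧ lexLt (shift^[m] p.1) p.2) ∧
    (∀ n : ℕ, 1 ≤ n → lexLt p.1 (shift^[n] p.2) ∧ lexLt (shift^[n] p.2) p.2)}

lemma shift_iter (x : ℕ → Bool) (k i : ℕ) : shift^[k] x i = x (i + k) := by
  induction k generalizing x with
  | zero => rfl
  | succ k ih =>
    rw [Function.iterate_succ_apply, ih]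
    rfl

lemma bool_lt_iff (a b : Bool) : a < b ↔ a = false ∧ b = true := by
  revert a b
  decide

lemma lexLt_eval {a b : ℕ → Bool} (h : lexLt a b) (d : ℕ)
    (hagree : ∀ i < d, a i = b i) (hdiff : a d ≠ b d) :
    a d = false ∧ b d = true := by
  obtain ⟨k, hk1, hk2⟩ := h
  rw [bool_lt_iff] at hk2
  have hkd : k = d := by
    rcases lt_trichotomy k d with h' | h' | h'
    · have he := hagree k h'
      rw [hk2.1, hk2.2] at he
      exact absurd he (by decide)
    · exact h'
    · exact absurd (hk1 d h') hdiff
  subst hkd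
  exact hk2


/-- The periodic modifications
`mu' = (mu_1…mu_{n-1} 0 alpha_1…alpha_{m-1} 1)^∞` and
`alpha' = (alpha_1…alpha_{m-1} 1 mu_1…mu_{n-1} 0)^∞` satisfy
`σ^n(mu') = alpha'` and `σ^m(alpha') = mu'`; hence `(mu', alpha')` is not in the
closure of `U'_2` whenever it lies in `V'_2`. -/
theorem stmt19 (mu alpha : ℕ → Bool) (hU : (mu, alpha) ∈ U2')
    (n m : ℕ) (hn : 1 ≤ n) (hm : 1 ≤ m)
    (hmun : mu (n - 1) = true) (halm : alpha (m - 1) = false)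
    (mu' alpha' : ℕ → Bool)
    (hmu' : mu' = fun i => if i % (n + m) < n - 1 then mu (i % (n + m))
      else if i % (n + m) = n - 1 then false
      else if i % (n + m) < n + m - 1 then alpha (i % (n + m) - n)
      else true)
    (halpha' : alpha' = fun i => if i % (n + m) < m - 1 then alpha (i % (n + m))
      else if i % (n + m) = m - 1 then true
      else if i % (n + m) < m + n - 1 then mu (i % (n + m) - m)
      else false) :
    shift^[n] mu' = alpha' ∧ shift^[m] alpha' = mu' ∧
      ((mu', alpha') ∈ V2' → (mu', alpha') ∉ closure U2') := by
  have hαn : shift^[n] mu' = alpha' := by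
    funext i
    rw [shift_iter]
    simp only [hmu', halpha']
    obtain ⟨r, hre, hrp⟩ : ∃ r, i % (n + m) = r ∧ r < n + m :=
      ⟨_, rfl, Nat.mod_lt _ (by omega)⟩
    have h1 : (i + n) % (n + m) = (r + n) % (n + m) := by
      rw [Nat.add_mod, hre, Nat.mod_eq_of_lt (show n < n + m by omega)]
    rw [hre]
    rcases Nat.lt_or_ge r m with hr | hr
    · have h2 : (r + n) % (n + m) = r + n := Nat.mod_eq_of_lt (by omega)
      rw [h1, h2]
      split_ifs <;> first | rfl | omega | (congr 1; omega)
    · have h2 : (r + n) % (n + m) = r - m := by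
        rw [show r + n = (r - m) + (n + m) by omega, Nat.add_mod_right,
          Nat.mod_eq_of_lt (by omega)]
      rw [h1, h2]
      split_ifs <;> first | rfl | omega | (congr 1; omega)
  have hβm : shift^[m] alpha' = mu' := by
    funext i
    rw [shift_iter]
    simp only [hmu', halpha']
    obtain ⟨r, hre, hrp⟩ : ∃ r, i % (n + m) = r ∧ r < n + m :=
      ⟨_, rfl, Nat.mod_lt _ (by omega)⟩
    have h1 : (i + m) % (n + m) = (r + m) % (n + m) := by
      rw [Nat.add_mod, hre, Nat.mod_eq_of_lt (show m < n + m by omega)]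
    rw [hre]
    rcases Nat.lt_or_ge r n with hr | hr
    · have h2 : (r + m) % (n + m) = r + m := Nat.mod_eq_of_lt (by omega)
      rw [h1, h2]
      split_ifs <;> first | rfl | omega | (congr 1; omega)
    · have h2 : (r + m) % (n + m) = r - n := by
        rw [show r + m = (r - n) + (n + m) by omega, Nat.add_mod_right,
          Nat.mod_eq_of_lt (by omega)]
      rw [h1, h2]
      split_ifs <;> first | rfl | omega | (congr 1; omega)
  refine ⟨hαn, hβm, ?_⟩
  intro _ hcl
  rw [mem_closure_iff] at hcl
  have hopen : IsOpen {q : (ℕ → Bool) × (ℕ → Bool) |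
      ∀ i < n + m, q.1 i = mu' i ∧ q.2 i = alpha' i} := by
    have hset : {q : (ℕ → Bool) × (ℕ → Bool) |
        ∀ i < n + m, q.1 i = mu' i ∧ q.2 i = alpha' i}
        = ⋂ i ∈ Finset.range (n + m),
          ((fun q : (ℕ → Bool) × (ℕ → Bool) => q.1 i) ⁻¹' {mu' i} ∩
           (fun q : (ℕ → Bool) × (ℕ → Bool) => q.2 i) ⁻¹' {alpha' i}) := by
      ext q
      simp [Finset.mem_range]
    rw [hset]
    apply isOpen_biInter_finset
    intro i _
    exact ((isOpen_discrete _).preimage ((continuous_apply i).comp continuous_fst)).inter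
      ((isOpen_discrete _).preimage ((continuous_apply i).comp continuous_snd))
  obtain ⟨⟨x, y⟩, hO, hUxy⟩ := hcl _ hopen (fun i _ => ⟨rfl, rfl⟩)
  simp only [Set.mem_setOf_eq] at hO
  simp only [U2', Set.mem_setOf_eq] at hUxy
  obtain ⟨hx0, hy0, hA, hB⟩ := hUxy
  -- basic lemmas about mu' and alpha'
  have hmu'eq : ∀ i j : ℕ, i % (n + m) = j % (n + m) → mu' i = mu' j := by
    intro i j h
    simp only [hmu']
    rw [h]
  have hal'eq : ∀ i j : ℕ, i % (n + m) = j % (n + m) → alpha' i = alpha' j := by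
    intro i j h
    simp only [halpha']
    rw [h]
  have hmu'per : ∀ i, mu' (i + (n + m)) = mu' i :=
    fun i => hmu'eq _ _ (Nat.add_mod_right i (n + m))
  have hal'per : ∀ i, alpha' (i + (n + m)) = alpha' i :=
    fun i => hal'eq _ _ (Nat.add_mod_right i (n + m))
  have hαμ : ∀ i, alpha' i = mu' (i + n) := fun i => by rw [← hαn, shift_iter]
  have hμα : ∀ i, mu' i = alpha' (i + m) := fun i => by rw [← hβm, shift_iter]
  -- x ≠ mu', y ≠ alpha'
  have hxne : x ≠ mu' := by
    intro he
    obtain ⟨k, _, hk⟩ := (hA (n + m) (by omega)).1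
    rw [he, shift_iter, hmu'per k] at hk
    exact lt_irrefl _ hk
  have hyne : y ≠ alpha' := by
    intro he
    obtain ⟨k, _, hk⟩ := (hB (n + m) (by omega)).2
    rw [he, shift_iter, hal'per k] at hk
    exact lt_irrefl _ hk
  classical
  have hsx : ∃ s, x s ≠ mu' s := Function.ne_iff.mp hxne
  have hty : ∃ t, y t ≠ alpha' t := Function.ne_iff.mp hyne
  obtain ⟨s, hs, hsmin⟩ : ∃ s, x s ≠ mu' s ∧ ∀ i < s, x i = mu' i :=
    ⟨Nat.find hsx, Nat.find_spec hsx, fun i hi => not_not.mp (Nat.find_min hsx hi)⟩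
  obtain ⟨t, ht, htmin⟩ : ∃ t, y t ≠ alpha' t ∧ ∀ i < t, y i = alpha' i :=
    ⟨Nat.find hty, Nat.find_spec hty, fun i hi => not_not.mp (Nat.find_min hty hi)⟩
  have hsge : n + m ≤ s := by
    by_contra h
    exact hs (hO s (by omega)).1
  have htge : n + m ≤ t := by
    by_contra h
    exact ht (hO t (by omega)).2
  have hsub : s - (n + m) + (n + m) = s := by omega
  have htsub : t - (n + m) + (n + m) = t := by omega
  have hmus : mu' s = mu' (s - (n + m)) := by rw [← hmu'per (s - (n + m)), hsub]
  have htas : alpha' t = alpha' (t - (n + m)) := by rw [← hal'per (t - (n + m)), htsub]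
  have hf1 : mu' s = false ∧ x s = true := by
    have key := lexLt_eval (hA (n + m) (by omega)).1 (s - (n + m))
      (fun i hi => by
        rw [shift_iter, hsmin i (by omega), hsmin (i + (n + m)) (by omega), hmu'per])
      (by
        rw [shift_iter, hsub, hsmin (s - (n + m)) (by omega), ← hmus]
        exact Ne.symm hs)
    constructor
    · rw [hmus, ← hsmin (s - (n + m)) (by omega)]
      exact key.1
    · have h2 := key.2
      rw [shift_iter, hsub] at h2
      exact h2
  have hf2 : y t = false ∧ alpha' t = true := by
    have key := lexLt_eval (hB (n + m) (by omega)).2 (t - (n + m))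
      (fun i hi => by
        rw [shift_iter, htmin (i + (n + m)) (by omega), hal'per]
        exact (htmin i (by omega)).symm)
      (by
        rw [shift_iter, htsub, htmin (t - (n + m)) (by omega), ← htas]
        exact ht)
    constructor
    · have h1 := key.1
      rw [shift_iter, htsub] at h1
      exact h1
    · rw [htas, ← htmin (t - (n + m)) (by omega)]
      exact key.2
  rcases lt_trichotomy (s - n) t with hc | hc | hc
  · -- case A : s - n < t
    have key := lexLt_eval (hA n hn).2 (s - n)
      (fun i hi => by
        rw [shift_iter, hsmin (i + n) (by omega), ← hαμ i]
        exact (htmin i (by omega)).symm)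
      (by
        rw [shift_iter, show s - n + n = s by omega, htmin (s - n) (by omega),
          hαμ (s - n), show s - n + n = s by omega]
        exact hs)
    have h1 := key.1
    rw [shift_iter, show s - n + n = s by omega, hf1.2] at h1
    exact absurd h1 (by decide)
  · -- case C : s - n = t
    have key := lexLt_eval (hA n hn).2 t
      (fun i hi => by
        rw [shift_iter, hsmin (i + n) (by omega), ← hαμ i]
        exact (htmin i (by omega)).symm)
      (by
        rw [shift_iter, show t + n = s by omega, hf1.2, hf2.1]
        decide)
    have h1 := key.1
    rw [shift_iter, show t + n = s by omega, hf1.2] at h1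
    exact absurd h1 (by decide)
  · -- case B : t < s - n
    have key := lexLt_eval (hB m hm).1 (t - m)
      (fun i hi => by
        rw [shift_iter, hsmin i (by omega), hμα i]
        exact (htmin (i + m) (by omega)).symm)
      (by
        rw [shift_iter, show t - m + m = t by omega, hsmin (t - m) (by omega),
          hμα (t - m), show t - m + m = t by omega, hf2.2, hf2.1]
        decide)
    have h1 := key.1
    rw [hsmin (t - m) (by omega), hμα (t - m), show t - m + m = t by omega, hf2.2] at h1
    exact absurd h1 (by decide)
end
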